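/- Let n ∈ (0,2), θ = (1/π)·arccos(n/2), γ₊ = 2^{3/2}·cos(πθ/2), γ₋ = γ₊ − (2^{3/2}/θ)·sin(πθ/2), and let r₊ be as in the context. Then there exists a constant C > 0 such that for all v > 0, 0 ≤ r₊(v) ≤ C·min(√v, e^{(2θ−3)v}). In particular, r₊ is bounded on (0,∞), integrable on (0,∞), and the function v ↦ r₊(v)/v is integrable on (0,1]. -/
import Mathlib


open Real MeasureTheory Filter Topology

/-- θ = (1/π)·arccos(n/2). -/
noncomputable def theta (n : ℝ) : ℝ := Real.arccos (n / 2) / π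

/-- γ₊ = 2^{3/2}·cos(πθ/2). -/
noncomputable def gammaP (n : ℝ) : ℝ := (2 : ℝ) ^ ((3 : ℝ) / 2) * Real.cos (π * theta n / 2)

/-- γ₋ = γ₊ − (2^{3/2}/θ)·sin(πθ/2). -/
noncomputable def gammaM (n : ℝ) : ℝ :=
  gammaP n - ((2 : ℝ) ^ ((3 : ℝ) / 2) / theta n) * Real.sin (π * theta n / 2)

/-- r₊(v) = ((γ₊−γ₋)/(√2·πθ)) · e^{−3v} · [ (e^{2v}+√(e^{4v}−1))^θ − (e^{2v}−√(e^{4v}−1))^θ ]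
for v > 0, and r₊(v) = 0 for v ≤ 0. -/
noncomputable def rPlus (n : ℝ) (v : ℝ) : ℝ :=
  if 0 < v then
    ((gammaP n - gammaM n) / (Real.sqrt 2 * π * theta n)) * Real.exp (-3 * v) *
      ((Real.exp (2 * v) + Real.sqrt (Real.exp (4 * v) - 1)) ^ theta n -
        (Real.exp (2 * v) - Real.sqrt (Real.exp (4 * v) - 1)) ^ theta n)
  else 0

/-- Core pointwise estimate for the explicit expression appearing in `rPlus`. -/
lemma rPlus_core (θ c : ℝ) (hθ0 : 0 < θ) (hθ1 : θ ≤ 1) (hc : 0 ≤ c) (v : ℝ) (hv : 0 < v) :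
    0 ≤ c * Real.exp (-3 * v) *
        ((Real.exp (2 * v) + Real.sqrt (Real.exp (4 * v) - 1)) ^ θ -
          (Real.exp (2 * v) - Real.sqrt (Real.exp (4 * v) - 1)) ^ θ) ∧
      c * Real.exp (-3 * v) *
        ((Real.exp (2 * v) + Real.sqrt (Real.exp (4 * v) - 1)) ^ θ -
          (Real.exp (2 * v) - Real.sqrt (Real.exp (4 * v) - 1)) ^ θ) ≤ 4 * c * Real.sqrt v ∧
      c * Real.exp (-3 * v) *
        ((Real.exp (2 * v) + Real.sqrt (Real.exp (4 * v) - 1)) ^ θ -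
          (Real.exp (2 * v) - Real.sqrt (Real.exp (4 * v) - 1)) ^ θ) ≤
        c * 2 ^ θ * Real.exp ((2 * θ - 3) * v) := by
  have hE1 : (1 : ℝ) < Real.exp (2 * v) := by
    have h := Real.add_one_lt_exp (x := 2 * v) (by positivity)
    linarith
  set E := Real.exp (2 * v) with hE
  have hE4 : Real.exp (4 * v) = E ^ 2 := by
    rw [hE, sq, ← Real.exp_add]; ring_nf
  have hE40 : 0 ≤ Real.exp (4 * v) - 1 := by nlinarith
  set S := Real.sqrt (Real.exp (4 * v) - 1) with hS
  have hS0 : 0 ≤ S := Real.sqrt_nonneg _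
  have hS2 : S ^ 2 = E ^ 2 - 1 := by rw [hS, Real.sq_sqrt hE40, hE4]
  have hSltE : S < E := by nlinarith
  have hBpos : 0 < E - S := by linarith
  have hBle1 : E - S ≤ 1 := by nlinarith
  have hApos : (1 : ℝ) ≤ E + S := by linarith
  -- S ≤ 2 √v E
  have hsv : Real.sqrt v ^ 2 = v := Real.sq_sqrt hv.le
  have hexp : Real.exp (4 * v) - 1 ≤ 4 * v * Real.exp (4 * v) := by
    have h := Real.add_one_le_exp (-(4 * v))
    have h2 : Real.exp (-(4 * v)) * Real.exp (4 * v) = 1 := by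
      rw [← Real.exp_add]; simp
    nlinarith [Real.exp_pos (4 * v)]
  have hSb : S ≤ 2 * Real.sqrt v * E := by
    have h1 : Real.exp (4 * v) - 1 ≤ (2 * Real.sqrt v * E) ^ 2 := by nlinarith
    calc S ≤ Real.sqrt ((2 * Real.sqrt v * E) ^ 2) := Real.sqrt_le_sqrt h1
      _ = 2 * Real.sqrt v * E := Real.sqrt_sq (by positivity)
  -- rpow facts
  have hD0 : 0 ≤ (E + S) ^ θ - (E - S) ^ θ :=
    sub_nonneg.2 (Real.rpow_le_rpow hBpos.le (by linarith) hθ0.le)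
  have hDle1 : (E + S) ^ θ - (E - S) ^ θ ≤ 2 * S := by
    have h1 : (E + S) ^ θ ≤ E + S := by
      calc (E + S) ^ θ ≤ (E + S) ^ (1 : ℝ) :=
            Real.rpow_le_rpow_of_exponent_le hApos hθ1
        _ = E + S := Real.rpow_one _
    have h2 : E - S ≤ (E - S) ^ θ := by
      calc E - S = (E - S) ^ (1 : ℝ) := (Real.rpow_one _).symm
        _ ≤ (E - S) ^ θ := Real.rpow_le_rpow_of_exponent_ge hBpos hBle1 hθ1
    linarith
  have hDle2 : (E + S) ^ θ - (E - S) ^ θ ≤ 2 ^ θ * Real.exp (2 * θ * v) := by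
    have h1 : (E + S) ^ θ ≤ (2 * E) ^ θ :=
      Real.rpow_le_rpow (by linarith) (by linarith) hθ0.le
    have h2 : (2 * E) ^ θ = 2 ^ θ * E ^ θ := Real.mul_rpow (by norm_num) (by positivity)
    have h3 : E ^ θ = Real.exp (2 * θ * v) := by
      rw [hE, ← Real.exp_mul]; ring_nf
    have h4 : 0 ≤ (E - S) ^ θ := Real.rpow_nonneg hBpos.le _
    have := h1.trans_eq (h2.trans (by rw [h3]))
    linarith
  have hexp3 : 0 < Real.exp (-3 * v) := Real.exp_pos _
  refine ⟨by positivity, ?_, ?_⟩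
  · have step : c * Real.exp (-3 * v) * ((E + S) ^ θ - (E - S) ^ θ) ≤
        c * Real.exp (-3 * v) * (4 * Real.sqrt v * E) := by
      apply mul_le_mul_of_nonneg_left _ (by positivity)
      nlinarith
    have heq : c * Real.exp (-3 * v) * (4 * Real.sqrt v * E) =
        4 * c * Real.sqrt v * (Real.exp (-3 * v) * Real.exp (2 * v)) := by
      rw [hE]; ring
    have hcomb : Real.exp (-3 * v) * Real.exp (2 * v) = Real.exp (-v) := by
      rw [← Real.exp_add]; ring_nf
    have hle1 : Real.exp (-v) ≤ 1 := Real.exp_le_one_iff.2 (by linarith)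
    have hfin : 4 * c * Real.sqrt v * Real.exp (-v) ≤ 4 * c * Real.sqrt v := by
      nlinarith [mul_nonneg (mul_nonneg hc (Real.sqrt_nonneg v)) (sub_nonneg.2 hle1)]
    calc c * Real.exp (-3 * v) * ((E + S) ^ θ - (E - S) ^ θ) ≤
          c * Real.exp (-3 * v) * (4 * Real.sqrt v * E) := step
      _ = 4 * c * Real.sqrt v * Real.exp (-v) := by rw [heq, hcomb]
      _ ≤ 4 * c * Real.sqrt v := hfin
  · have step : c * Real.exp (-3 * v) * ((E + S) ^ θ - (E - S) ^ θ) ≤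
        c * Real.exp (-3 * v) * (2 ^ θ * Real.exp (2 * θ * v)) := by
      apply mul_le_mul_of_nonneg_left hDle2 (by positivity)
    have heq : c * Real.exp (-3 * v) * (2 ^ θ * Real.exp (2 * θ * v)) =
        c * 2 ^ θ * Real.exp ((2 * θ - 3) * v) := by
      rw [show (2 * θ - 3) * v = -3 * v + 2 * θ * v by ring, Real.exp_add]; ring
    linarith [step.trans_eq heq]

/-- Pointwise bounds for r₊: 0 ≤ r₊(v) ≤ C·min(√v, e^{(2θ−3)v}) for v > 0; in particular
r₊ is bounded and integrable on (0,∞) and v ↦ r₊(v)/v is integrable on (0,1]. -/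
theorem rPlus_bounds (n : ℝ) (hn : n ∈ Set.Ioo (0 : ℝ) 2) :
    (∃ C > 0, ∀ v > 0, 0 ≤ rPlus n v ∧
      rPlus n v ≤ C * min (Real.sqrt v) (Real.exp ((2 * theta n - 3) * v))) ∧
    (∃ M : ℝ, ∀ v > 0, rPlus n v ≤ M) ∧
    MeasureTheory.IntegrableOn (rPlus n) (Set.Ioi 0) ∧
    MeasureTheory.IntegrableOn (fun v => rPlus n v / v) (Set.Ioc 0 1) := by
  obtain ⟨hn0, hn2⟩ := hn
  have hθ0 : 0 < theta n := div_pos (Real.arccos_pos.2 (by linarith)) Real.pi_pos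
  have hθ2 : theta n < 1 / 2 := by
    have h : Real.arccos (n / 2) < π / 2 := Real.arccos_lt_pi_div_two.2 (by linarith)
    rw [theta, div_lt_iff₀ Real.pi_pos]
    linarith
  have hθ1 : theta n ≤ 1 := by linarith
  set c := (gammaP n - gammaM n) / (Real.sqrt 2 * π * theta n) with hc
  have hc0 : 0 < c := by
    have hsin : 0 < Real.sin (π * theta n / 2) := by
      apply Real.sin_pos_of_pos_of_lt_pi
      · have := Real.pi_pos; positivity
      · nlinarith [Real.pi_pos]
    have hdiff : gammaP n - gammaM n =
        ((2 : ℝ) ^ ((3 : ℝ) / 2) / theta n) * Real.sin (π * theta n / 2) := by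
      rw [gammaM]; ring
    rw [hc, hdiff]
    apply div_pos
    · exact mul_pos (div_pos (Real.rpow_pos_of_pos two_pos _) hθ0) hsin
    · exact mul_pos (mul_pos (Real.sqrt_pos.2 two_pos) Real.pi_pos) hθ0
  have hval : ∀ v : ℝ, 0 < v → rPlus n v =
      c * Real.exp (-3 * v) *
        ((Real.exp (2 * v) + Real.sqrt (Real.exp (4 * v) - 1)) ^ theta n -
          (Real.exp (2 * v) - Real.sqrt (Real.exp (4 * v) - 1)) ^ theta n) := by
    intro v hv
    simp only [rPlus, if_pos hv, hc]
  have h2θ : (0 : ℝ) < 2 ^ theta n := Real.rpow_pos_of_pos two_pos _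
  set C := c * 2 ^ theta n + 4 * c with hC
  have hC0 : 0 < C := by nlinarith [mul_pos hc0 h2θ]
  have key : ∀ v > (0 : ℝ), 0 ≤ rPlus n v ∧
      rPlus n v ≤ C * min (Real.sqrt v) (Real.exp ((2 * theta n - 3) * v)) := by
    intro v hv
    obtain ⟨k0, k1, k2⟩ := rPlus_core (theta n) c hθ0 hθ1 hc0.le v hv
    rw [← hval v hv] at k0 k1 k2
    refine ⟨k0, ?_⟩
    rw [mul_min_of_nonneg _ _ hC0.le]
    refine le_min ?_ ?_
    · have : 4 * c * Real.sqrt v ≤ C * Real.sqrt v := by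
        nlinarith [Real.sqrt_nonneg v, mul_pos hc0 h2θ]
      linarith
    · have : c * 2 ^ theta n * Real.exp ((2 * theta n - 3) * v) ≤
          C * Real.exp ((2 * theta n - 3) * v) := by
        nlinarith [Real.exp_pos ((2 * theta n - 3) * v), hc0]
      linarith
  have hexp_le : ∀ v > (0 : ℝ), rPlus n v ≤ C * Real.exp ((2 * theta n - 3) * v) := by
    intro v hv
    exact (key v hv).2.trans (mul_le_mul_of_nonneg_left (min_le_right _ _) hC0.le)
  have hsqrt_le : ∀ v > (0 : ℝ), rPlus n v ≤ C * Real.sqrt v := by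
    intro v hv
    exact (key v hv).2.trans (mul_le_mul_of_nonneg_left (min_le_left _ _) hC0.le)
  have hmeas : Measurable (rPlus n) := by
    unfold rPlus
    refine Measurable.ite measurableSet_Ioi ?_ measurable_const
    apply Measurable.mul
    · exact (measurable_const.mul (Real.measurable_exp.comp
        (measurable_const.mul measurable_id)))
    · apply Measurable.sub
      · exact ((Real.measurable_exp.comp (measurable_const.mul measurable_id)).add
          ((Real.measurable_exp.comp (measurable_const.mul measurable_id)).sub
            measurable_const).sqrt).pow measurable_const
      · exact ((Real.measurable_exp.comp (measurable_const.mul measurable_id)).sub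
          ((Real.measurable_exp.comp (measurable_const.mul measurable_id)).sub
            measurable_const).sqrt).pow measurable_const
  refine ⟨⟨C, hC0, key⟩, ⟨C, ?_⟩, ?_, ?_⟩
  · intro v hv
    have h1 := hexp_le v hv
    have h2 : Real.exp ((2 * theta n - 3) * v) ≤ 1 :=
      Real.exp_le_one_iff.2 (by nlinarith)
    nlinarith
  · apply Integrable.mono' (((exp_neg_integrableOn_Ioi 0
      (show (0 : ℝ) < 3 - 2 * theta n by linarith)).const_mul C))
    · exact hmeas.aestronglyMeasurable.restrict
    · rw [ae_restrict_iff' measurableSet_Ioi]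
      filter_upwards with x hx
      rw [Real.norm_eq_abs, abs_of_nonneg (key x hx).1]
      have := hexp_le x hx
      have harg : (2 * theta n - 3) * x = -(3 - 2 * theta n) * x := by ring
      rwa [harg] at this
  · have hg : IntegrableOn (fun x : ℝ => C * x ^ (-(1 / 2) : ℝ)) (Set.Ioc 0 1) := by
      have h := intervalIntegral.intervalIntegrable_rpow' (a := 0) (b := 1)
        (r := -(1 / 2)) (by norm_num)
      rw [intervalIntegrable_iff_integrableOn_Ioc_of_le (by norm_num)] at h
      exact h.const_mul C
    apply Integrable.mono' hg
    · exact (hmeas.div measurable_id).aestronglyMeasurable.restrict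
    · rw [ae_restrict_iff' measurableSet_Ioc]
      filter_upwards with x hx
      obtain ⟨hx0, hx1⟩ := hx
      rw [Real.norm_eq_abs, abs_of_nonneg (div_nonneg (key x hx0).1 hx0.le)]
      have h1 : rPlus n x / x ≤ C * Real.sqrt x / x := by
        gcongr
        exact hsqrt_le x hx0
      have hxr : C * Real.sqrt x / x = C * x ^ (-(1 / 2) : ℝ) := by
        rw [Real.sqrt_eq_rpow, mul_div_assoc]
        congr 1
        rw [show (-(1 / 2) : ℝ) = 1 / 2 - 1 by norm_num, Real.rpow_sub hx0, Real.rpow_one]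
      linarith [h1.trans_eq hxr]
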